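/- arXiv:2008.02641 — 5 statements merged into one kernel-verified Lean document; each statement's English description precedes it below -/
import Mathlib

section
/- Let tpr and tnr be real numbers with 1/2 < tpr < 1 and 1/2 < tnr < 1, and let ρ ∈ (0,1). Then the second derivative (iterated derivative of order 2) of the per-pool information gain φ at ρ equals −(1/ln 2)·( (1−2·tnr)²/q₀(ρ) + (2·tpr−1)²/q₁(ρ) ), and this value is strictly negative. -/
open Real

noncomputable def q0 (tnr ρ : ℝ) : ℝ := (1 - 2 * tnr) * ρ + tnr
noncomputable def q1 (tpr ρ : ℝ) : ℝ := (2 * tpr - 1) * ρ + (1 - tpr)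
noncomputable def betaC (tnr : ℝ) : ℝ := tnr * logb 2 tnr + (1 - tnr) * logb 2 (1 - tnr)
noncomputable def alphaC (tpr : ℝ) : ℝ := tpr * logb 2 tpr + (1 - tpr) * logb 2 (1 - tpr)
noncomputable def infoGain (tpr tnr ρ : ℝ) : ℝ :=
  -(q0 tnr ρ * logb 2 (q0 tnr ρ)) - q1 tpr ρ * logb 2 (q1 tpr ρ)
    + (1 - ρ) * betaC tnr + ρ * alphaC tpr

/-! Writing `-q log₂ q = negMulLog q / log 2`, the gain is `(negMulLog q₀ + negMulLog q₁) / log 2`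
plus an affine function of `ρ`, and `negMulLog (c ρ + a)` has second derivative `-c² / (c ρ + a)`. -/

lemma hasDerivAt_affine (c a x : ℝ) : HasDerivAt (fun y => c * y + a) c x := by
  simpa using ((hasDerivAt_id x).const_mul c).add_const a

lemma iteratedDeriv_two_affine (c a x : ℝ) : iteratedDeriv 2 (fun y => c * y + a) x = 0 := by
  rw [iteratedDeriv_succ', iteratedDeriv_one, funext fun y => (hasDerivAt_affine c a y).deriv,
    deriv_const]

namespace Real

lemma contDiffAt_negMulLog {n : WithTop ℕ∞} {x : ℝ} (hx : x ≠ 0) :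
    ContDiffAt ℝ n negMulLog x := by
  rw [negMulLog_def]
  exact contDiffAt_id.neg.mul (contDiffAt_log.2 hx)

lemma iteratedDeriv_two_negMulLog_affine {c a x : ℝ} (hx : c * x + a ≠ 0) :
    iteratedDeriv 2 (fun y => negMulLog (c * y + a)) x = -c ^ 2 / (c * x + a) := by
  have hopen : IsOpen {y : ℝ | c * y + a ≠ 0} := isOpen_ne_fun (by fun_prop) (by fun_prop)
  have hderiv : ∀ y, c * y + a ≠ 0 →
      HasDerivAt (fun y => negMulLog (c * y + a)) ((-log (c * y + a) - 1) * c) y := fun y hy =>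
    ((hasDerivAt_negMulLog hy).comp y (hasDerivAt_affine c a y) :)
  have hderiv_eq : deriv (fun y => negMulLog (c * y + a)) =ᶠ[nhds x]
      fun y => (-log (c * y + a) - 1) * c := by
    filter_upwards [hopen.mem_nhds hx] with y hy using (hderiv y hy).deriv
  have hlog : HasDerivAt (fun y => log (c * y + a)) (c / (c * x + a)) x := by
    simpa using (hasDerivAt_affine c a x).log hx
  have hderiv2 : HasDerivAt (fun y => (-log (c * y + a) - 1) * c) (-(c / (c * x + a)) * c) x :=
    (hlog.neg.sub_const 1).mul_const c
  rw [iteratedDeriv_succ, iteratedDeriv_one, hderiv_eq.deriv_eq, hderiv2.deriv]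
  ring

end Real

lemma q0_pos {tnr ρ : ℝ} (h0 : 0 < tnr) (h1 : tnr < 1) (hρ : ρ ∈ Set.Icc (0 : ℝ) 1) :
    0 < q0 tnr ρ := by
  obtain ⟨hρ0, hρ1⟩ := hρ
  have hq0 : q0 tnr ρ = tnr * (1 - tnr) + tnr ^ 2 * (1 - ρ) + (1 - tnr) ^ 2 * ρ := by
    unfold q0
    ring
  rw [hq0]
  have := mul_pos h0 (sub_pos.2 h1)
  have := mul_nonneg (sq_nonneg tnr) (sub_nonneg.2 hρ1)
  have := mul_nonneg (sq_nonneg (1 - tnr)) hρ0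
  linarith

lemma q1_eq_q0_one_sub (tpr ρ : ℝ) : q1 tpr ρ = q0 tpr (1 - ρ) := by
  unfold q0 q1
  ring

lemma q1_pos {tpr ρ : ℝ} (h0 : 0 < tpr) (h1 : tpr < 1) (hρ : ρ ∈ Set.Icc (0 : ℝ) 1) :
    0 < q1 tpr ρ := by
  rw [q1_eq_q0_one_sub]
  exact q0_pos h0 h1 ⟨by linarith [hρ.2], by linarith [hρ.1]⟩

lemma infoGain_eq_negMulLog (tpr tnr : ℝ) :
    infoGain tpr tnr = fun ρ => (negMulLog (q0 tnr ρ) + negMulLog (q1 tpr ρ)) / log 2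
      + ((alphaC tpr - betaC tnr) * ρ + betaC tnr) := by
  funext ρ
  simp only [infoGain, negMulLog, logb]
  ring

lemma iteratedDeriv_two_infoGain {tpr tnr ρ : ℝ} (h0 : q0 tnr ρ ≠ 0) (h1 : q1 tpr ρ ≠ 0) :
    iteratedDeriv 2 (infoGain tpr tnr) ρ
      = -(1 / log 2) * ((1 - 2 * tnr) ^ 2 / q0 tnr ρ + (2 * tpr - 1) ^ 2 / q1 tpr ρ) := by
  have hq0 : ContDiffAt ℝ 2 (fun ρ => negMulLog (q0 tnr ρ)) ρ :=
    (contDiffAt_negMulLog h0).comp ρ (by unfold q0; fun_prop)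
  have hq1 : ContDiffAt ℝ 2 (fun ρ => negMulLog (q1 tpr ρ)) ρ :=
    (contDiffAt_negMulLog h1).comp ρ (by unfold q1; fun_prop)
  rw [infoGain_eq_negMulLog, iteratedDeriv_fun_add (by fun_prop) (by fun_prop), iteratedDeriv_div_const,
    iteratedDeriv_fun_add hq0 hq1, iteratedDeriv_two_affine]
  simp only [q0, q1] at h0 h1 ⊢
  rw [iteratedDeriv_two_negMulLog_affine h0, iteratedDeriv_two_negMulLog_affine h1]
  ring

theorem per_pool_info_gain_second_deriv (tpr tnr : ℝ)
    (htpr1 : 1 / 2 < tpr) (htpr2 : tpr < 1)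
    (htnr1 : 1 / 2 < tnr) (htnr2 : tnr < 1)
    (ρ : ℝ) (hρ : ρ ∈ Set.Ioo (0 : ℝ) 1) :
    iteratedDeriv 2 (infoGain tpr tnr) ρ
      = -(1 / Real.log 2) * ((1 - 2 * tnr) ^ 2 / q0 tnr ρ + (2 * tpr - 1) ^ 2 / q1 tpr ρ) ∧
    iteratedDeriv 2 (infoGain tpr tnr) ρ < 0 := by
  have hq0 := q0_pos (by linarith) htnr2 (Set.Ioo_subset_Icc_self hρ)
  have hq1 := q1_pos (by linarith) htpr2 (Set.Ioo_subset_Icc_self hρ)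
  have hsecond := iteratedDeriv_two_infoGain hq0.ne' hq1.ne'
  refine ⟨hsecond, hsecond ▸ ?_⟩
  have hlog2 : 0 < 1 / log 2 := one_div_pos.2 (log_pos one_lt_two)
  have hA : 0 < (1 - 2 * tnr) ^ 2 / q0 tnr ρ := div_pos (sq_pos_of_neg (by linarith)) hq0
  have hB : 0 < (2 * tpr - 1) ^ 2 / q1 tpr ρ := div_pos (sq_pos_of_pos (by linarith)) hq1
  rw [neg_mul, neg_lt_zero]
  exact mul_pos hlog2 (add_pos hA hB)
end

section
/- Let tpr and tnr be real numbers with 1/2 < tpr < 1 and 1/2 < tnr < 1. Then there exists a unique ρ* ∈ [0,1] (depending only on tpr and tnr) such that φ(ρ) ≤ φ(ρ*) for all ρ ∈ [0,1]; consequently, for every number of pools B ∈ ℕ and every assignment of pool-positive probabilities ρ : Fin B → [0,1], the total information gain ∑_{b} φ(ρ b) is at most B·φ(ρ*). -/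
open Real

/-!
Up to the factor `1 / log 2` and an affine term, `φ` is `negMulLog ∘ q₁ + negMulLog ∘ q₀`, where
`q₀` and `q₁` are the affine maps sending `[0, 1]` onto the segments `[1 - tnr, tnr]` and
`[1 - tpr, tpr]` in `[0, 1]`. Since `tpr ≠ 1/2`, `q₁` is injective, so strict concavity of
`negMulLog` on `[0, ∞)` makes `φ` strictly concave on `[0, 1]`. A continuous strictly concave
function on a compact interval attains its maximum at exactly one point, and bounding each
summand by that maximum gives the bound for `B` pools.
-/

open AffineMap Set

section

variable {𝕜 E F β : Type*}

theorem StrictConcaveOn.smul [CommSemiring 𝕜] [PartialOrder 𝕜] [AddCommMonoid E]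
    [AddCommMonoid β] [PartialOrder β] [SMul 𝕜 E] [Module 𝕜 β] [PosSMulStrictMono 𝕜 β]
    {s : Set E} {f : E → β} {c : 𝕜} (hc : 0 < c) (hf : StrictConcaveOn 𝕜 s f) :
    StrictConcaveOn 𝕜 s fun x => c • f x :=
  ⟨hf.1, fun x hx y hy hxy a b ha hb hab =>
    calc
      a • c • f x + b • c • f y = c • (a • f x + b • f y) := by
        rw [smul_add, smul_comm c, smul_comm c]
      _ < c • f (a • x + b • y) := smul_lt_smul_of_pos_left (hf.2 hx hy hxy ha hb hab) hc⟩

theorem StrictConcaveOn.comp_affineMap [Field 𝕜] [LinearOrder 𝕜] [AddCommGroup E]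
    [AddCommGroup F] [Module 𝕜 E] [Module 𝕜 F] [AddCommMonoid β] [PartialOrder β] [SMul 𝕜 β]
    {f : F → β} {g : E →ᵃ[𝕜] F} (hg : Function.Injective g) {s : Set F}
    (hf : StrictConcaveOn 𝕜 s f) : StrictConcaveOn 𝕜 (g ⁻¹' s) (f ∘ g) :=
  ⟨hf.1.affine_preimage g, fun x hx y hy hxy a b ha hb hab =>
    calc
      a • f (g x) + b • f (g y) < f (a • g x + b • g y) := hf.2 hx hy (hg.ne hxy) ha hb hab
      _ = (f ∘ g) (a • x + b • y) := by rw [Function.comp_apply, Convex.combo_affine_apply hab]⟩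

end

lemma infoGain_eq (tpr tnr ρ : ℝ) :
    infoGain tpr tnr ρ = (log 2)⁻¹ • (negMulLog (lineMap (1 - tpr) tpr ρ)
      + negMulLog (lineMap tnr (1 - tnr) ρ)) + lineMap (betaC tnr) (alphaC tpr) ρ := by
  have hq0 : q0 tnr ρ = lineMap tnr (1 - tnr) ρ := by rw [q0, lineMap_apply_ring']; ring
  have hq1 : q1 tpr ρ = lineMap (1 - tpr) tpr ρ := by rw [q1, lineMap_apply_ring']; ring
  rw [infoGain, hq0, hq1, lineMap_apply_ring' (betaC tnr)]
  simp only [negMulLog, logb, smul_eq_mul]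
  ring

lemma continuous_infoGain (tpr tnr : ℝ) : Continuous (infoGain tpr tnr) := by
  simp only [funext (infoGain_eq tpr tnr), lineMap_apply_ring']
  fun_prop

lemma strictConcaveOn_infoGain {tpr tnr : ℝ} (htpr : tpr ∈ Icc 0 1) (htpr_ne : tpr ≠ 1 / 2)
    (htnr : tnr ∈ Icc 0 1) : StrictConcaveOn ℝ (Icc (0 : ℝ) 1) (infoGain tpr tnr) := by
  have hq1_nonneg : Icc (0 : ℝ) 1 ⊆ lineMap (1 - tpr) tpr ⁻¹' Ici 0 :=
    fun _ hρ => (convex_Ici (0 : ℝ)).lineMap_mem (sub_nonneg.2 htpr.2) htpr.1 hρ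
  have hq0_nonneg : Icc (0 : ℝ) 1 ⊆ lineMap tnr (1 - tnr) ⁻¹' Ici 0 :=
    fun _ hρ => (convex_Ici (0 : ℝ)).lineMap_mem htnr.1 (sub_nonneg.2 htnr.2) hρ
  have h_q1 : StrictConcaveOn ℝ (Icc (0 : ℝ) 1) (negMulLog ∘ lineMap (1 - tpr) tpr) :=
    (strictConcaveOn_negMulLog.comp_affineMap (lineMap_injective ℝ (by
      contrapose! htpr_ne; linarith))).subset hq1_nonneg (convex_Icc 0 1)
  have h_q0 : ConcaveOn ℝ (Icc (0 : ℝ) 1) (negMulLog ∘ lineMap tnr (1 - tnr)) :=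
    (concaveOn_negMulLog.comp_affineMap _).subset hq0_nonneg (convex_Icc 0 1)
  have h_lin : ConcaveOn ℝ (Icc (0 : ℝ) 1) (lineMap (betaC tnr) (alphaC tpr) : ℝ → ℝ) :=
    ((concaveOn_id convex_univ).comp_affineMap _).subset (subset_univ _) (convex_Icc 0 1)
  refine (((h_q1.add_concaveOn h_q0).smul (inv_pos.2 (log_pos one_lt_two))).add_concaveOn
    h_lin).congr fun ρ _ => ?_
  simp [infoGain_eq]

theorem StrictConcaveOn.existsUnique_isMaxOn {E : Type*} [AddCommGroup E] [Module ℝ E]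
    [TopologicalSpace E] {s : Set E} {f : E → ℝ} (hs : IsCompact s) (hne : s.Nonempty)
    (hcont : ContinuousOn f s) (hf : StrictConcaveOn ℝ s f) :
    ∃! x, x ∈ s ∧ IsMaxOn f s x := by
  obtain ⟨x, hx, hmax⟩ := hs.exists_isMaxOn hne hcont
  exact ⟨x, ⟨hx, hmax⟩, fun y ⟨hy, hy_max⟩ => hf.eq_of_isMaxOn hy_max hmax hy hx⟩

theorem per_pool_info_gain_unique_max (tpr tnr : ℝ)
    (htpr1 : 1 / 2 < tpr) (htpr2 : tpr < 1)
    (htnr1 : 1 / 2 < tnr) (htnr2 : tnr < 1) :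
    ∃ ρstar ∈ Set.Icc (0 : ℝ) 1,
      (∀ ρ ∈ Set.Icc (0 : ℝ) 1, infoGain tpr tnr ρ ≤ infoGain tpr tnr ρstar) ∧
      (∀ ρ' ∈ Set.Icc (0 : ℝ) 1,
        (∀ ρ ∈ Set.Icc (0 : ℝ) 1, infoGain tpr tnr ρ ≤ infoGain tpr tnr ρ') → ρ' = ρstar) ∧
      (∀ (B : ℕ) (ρ : Fin B → ℝ), (∀ b, ρ b ∈ Set.Icc (0 : ℝ) 1) →
        ∑ b, infoGain tpr tnr (ρ b) ≤ B * infoGain tpr tnr ρstar) := by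
  have hconc : StrictConcaveOn ℝ (Icc (0 : ℝ) 1) (infoGain tpr tnr) :=
    strictConcaveOn_infoGain ⟨by linarith, by linarith⟩ htpr1.ne' ⟨by linarith, by linarith⟩
  obtain ⟨ρstar, ⟨hρstar, hmax⟩, huniq⟩ := hconc.existsUnique_isMaxOn isCompact_Icc
    (nonempty_Icc.2 zero_le_one) (continuous_infoGain tpr tnr).continuousOn
  refine ⟨ρstar, hρstar, isMaxOn_iff.1 hmax,
    fun ρ' hρ' hρ'_max => huniq ρ' ⟨hρ', isMaxOn_iff.2 hρ'_max⟩,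
    fun B ρ hρ => ?_⟩
  simpa using Finset.sum_le_card_nsmul Finset.univ _ _ fun b _ => isMaxOn_iff.1 hmax _ (hρ b)
end

section
/- Let τ be a real number with 1/2 < τ < 1 and set tpr = tnr = τ. Then the per-pool information gain φ satisfies φ(ρ) ≤ φ(1/2) for all ρ ∈ [0,1]; that is, when the true positive rate equals the true negative rate, the optimal pool-positive probability is 1/2. -/
/-! With `tpr = tnr = τ` we have `q₁ = 1 − q₀`, so `φ(ρ)` is the binary entropy of `q₀(ρ)`
in bits plus the constant `β`. Since `q₀(1/2) = 1/2` whatever `τ` is, and binary entropy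
peaks at `1/2`, `ρ = 1/2` maximises `φ`. -/

open Real

lemma q1_eq_one_sub_q0 (τ ρ : ℝ) : q1 τ ρ = 1 - q0 τ ρ := by
  unfold q0 q1; ring

lemma q0_half (τ : ℝ) : q0 τ (1 / 2) = 2⁻¹ := by
  unfold q0; ring

lemma infoGain_self_eq_binEntropy (τ ρ : ℝ) :
    infoGain τ τ ρ = binEntropy (q0 τ ρ) / log 2 + betaC τ := by
  unfold infoGain alphaC betaC binEntropy logb
  rw [q1_eq_one_sub_q0, log_inv, log_inv]
  field_simp
  ring

theorem per_pool_info_gain_symmetric_max_at_half_general (τ : ℝ) :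
    ∀ ρ ∈ Set.Icc (0 : ℝ) 1, infoGain τ τ ρ ≤ infoGain τ τ (1 / 2) := by
  intro ρ _
  rw [infoGain_self_eq_binEntropy, infoGain_self_eq_binEntropy, q0_half, binEntropy_two_inv]
  have hlog2 : 0 < log 2 := log_pos one_lt_two
  gcongr
  exact binEntropy_le_log_two

theorem per_pool_info_gain_symmetric_max_at_half (τ : ℝ)
    (hτ1 : 1 / 2 < τ) (hτ2 : τ < 1) :
    ∀ ρ ∈ Set.Icc (0 : ℝ) 1, infoGain τ τ ρ ≤ infoGain τ τ (1 / 2) :=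
  per_pool_info_gain_symmetric_max_at_half_general τ
end

section
/- Let λ, μ, λ̃, μ̃, ε be real numbers with ε ≥ 0, 0 ≤ λ̃ ≤ λ, 0 ≤ μ̃ ≤ μ, λ − λ̃ ≤ 2ε, μ − μ̃ ≤ 2ε, λ̃ + μ̃ > 0 and λ + μ > 3ε. Then (λ−2ε)/(λ+μ) ≤ λ̃/(λ̃+μ̃) ≤ λ/(λ+μ−3ε). -/
/-! Cross-multiplying, with `a = λ - λ̃ ∈ [0, 2ε]` and `b = μ - μ̃ ∈ [0, 2ε]`, the two inequalities
become `0 ≤ λ̃ (a + b) + (2ε - a)(λ̃ + μ̃)` and `0 ≤ a μ̃ + λ̃ (3ε - b)`. -/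

variable {x y x' y' δ : ℝ}

theorem sub_div_add_le_div_add_of_sub_le (hx'0 : 0 ≤ x') (hx : x' ≤ x) (hy : y' ≤ y)
    (hxδ : x - x' ≤ δ) (hpos : 0 < x' + y') :
    (x - δ) / (x + y) ≤ x' / (x' + y') := by
  rw [div_le_div_iff₀ (by linarith) hpos]
  linear_combination mul_nonneg hx'0 (by linarith : 0 ≤ x - x' + (y - y')) +
    mul_nonneg (sub_nonneg.2 hxδ) hpos.le

theorem div_add_le_div_add_sub_of_sub_le (hx'0 : 0 ≤ x') (hx : x' ≤ x) (hy'0 : 0 ≤ y')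
    (hyδ : y - y' ≤ δ) (hpos : 0 < x' + y') (hδ : δ < x + y) :
    x' / (x' + y') ≤ x / (x + y - δ) := by
  rw [div_le_div_iff₀ hpos (by linarith)]
  linear_combination mul_nonneg (sub_nonneg.2 hx) hy'0 + mul_nonneg hx'0 (sub_nonneg.2 hyδ)

theorem mitm_reverse_interval_general (lam mu lamT muT ε : ℝ)
    (hlam : 0 ≤ lamT) (hlam' : lamT ≤ lam)
    (hmu : 0 ≤ muT) (hmu' : muT ≤ mu)
    (hlamε : lam - lamT ≤ 2 * ε) (hmuε : mu - muT ≤ 2 * ε)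
    (hpost : 0 < lamT + muT) (hpos : 3 * ε < lam + mu) :
    (lam - 2 * ε) / (lam + mu) ≤ lamT / (lamT + muT) ∧
      lamT / (lamT + muT) ≤ lam / (lam + mu - 3 * ε) :=
  ⟨sub_div_add_le_div_add_of_sub_le hlam hlam' hmu' hlamε hpost,
    div_add_le_div_add_sub_of_sub_le hlam hlam' hmu (by linarith) hpost hpos⟩

theorem mitm_reverse_interval (lam mu lamT muT ε : ℝ) (hε : 0 ≤ ε)
    (hlam : 0 ≤ lamT) (hlam' : lamT ≤ lam)
    (hmu : 0 ≤ muT) (hmu' : muT ≤ mu)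
    (hlamε : lam - lamT ≤ 2 * ε) (hmuε : mu - muT ≤ 2 * ε)
    (hpost : 0 < lamT + muT) (hpos : 3 * ε < lam + mu) :
    (lam - 2 * ε) / (lam + mu) ≤ lamT / (lamT + muT) ∧
      lamT / (lamT + muT) ≤ lam / (lam + mu - 3 * ε) :=
  mitm_reverse_interval_general lam mu lamT muT ε hlam hlam' hmu hmu' hlamε hmuε hpost hpos
end

section
/- Let ρ be a real number with 0 < ρ ≤ 1/e, and set k := (1−ρ)/ρ. Then (1/k)·√(1 − (1−ρ)^k)·(1−ρ)^{1−k/2} ≤ √(ρ·(1−ρ)), where the powers of (1−ρ) are real powers; equivalently, ρ·√((1−ρ)^{−k} − 1) ≤ √(ρ·(1−ρ)). That is, the asymptotic standard deviation of the pooled (Bloom filter) prevalence estimator with pool size k = (1−ρ)/ρ is at most that of the individual-test estimator whenever the prevalence ρ is at most 1/e. -/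
/-!
Write `x = 1 - ρ` and `k = x / ρ`. Since `(1/k) x^{1 - k/2} = ρ x^{-k/2}`, both left-hand sides
equal `ρ √(x^{-k} - 1)`, and `ρ √(x^{-k} - 1) ≤ √(ρ x)` amounts to `ρ ≤ x^k`.
Finally `log x ≥ 1 - 1/x = -ρ / x` (i.e. `1 - ρ ≥ e^{-ρ/(1-ρ)}`) gives `x^k ≥ e^{-1} ≥ ρ`.
-/

open Real

lemma Real.exp_neg_one_le_one_sub_rpow {ρ : ℝ} (hρ : 0 < ρ) (hρ1 : ρ < 1) :
    exp (-1) ≤ (1 - ρ) ^ ((1 - ρ) / ρ) := by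
  have hx : 0 < 1 - ρ := sub_pos.mpr hρ1
  rw [rpow_def_of_pos hx, exp_le_exp]
  calc (-1 : ℝ) = (1 - (1 - ρ)⁻¹) * ((1 - ρ) / ρ) := by field_simp; ring
    _ ≤ log (1 - ρ) * ((1 - ρ) / ρ) :=
      mul_le_mul_of_nonneg_right (one_sub_inv_le_log_of_pos hx) (by positivity)

lemma Real.sqrt_one_sub_rpow_mul_rpow_neg_half {x : ℝ} (hx : 0 < x) (k : ℝ) :
    √(1 - x ^ k) * x ^ (-(k / 2)) = √(x ^ (-k) - 1) := by
  have hhalf : x ^ (-(k / 2)) = √(x ^ (-k)) := by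
    rw [sqrt_eq_rpow, ← rpow_mul hx.le]
    ring_nf
  rw [hhalf, ← sqrt_mul' _ (rpow_nonneg hx.le _), sub_mul, one_mul, ← rpow_add hx,
    add_neg_cancel, rpow_zero]

lemma Real.one_div_div_mul_sqrt_one_sub_rpow_mul_rpow {x : ℝ} (hx : 0 < x) (ρ k : ℝ) :
    1 / (x / ρ) * √(1 - x ^ k) * x ^ (1 - k / 2) = ρ * √(x ^ (-k) - 1) := by
  rw [← sqrt_one_sub_rpow_mul_rpow_neg_half hx, one_div_div, sub_eq_add_neg (1 : ℝ) (k / 2),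
    rpow_add hx, rpow_one]
  field_simp

lemma Real.mul_sqrt_inv_sub_one_le_sqrt_mul_one_sub {ρ y : ℝ} (hρ : 0 < ρ) (hρy : ρ ≤ y) :
    ρ * √(y⁻¹ - 1) ≤ √(ρ * (1 - ρ)) := by
  rw [← sqrt_sq hρ.le, ← sqrt_mul (sq_nonneg ρ), sqrt_sq hρ.le]
  refine sqrt_le_sqrt ?_
  have hρ_div : ρ / y ≤ 1 := (div_le_one (hρ.trans_le hρy)).mpr hρy
  calc ρ ^ 2 * (y⁻¹ - 1) = ρ * (ρ / y) - ρ ^ 2 := by ring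
    _ ≤ ρ * 1 - ρ ^ 2 := by gcongr
    _ = ρ * (1 - ρ) := by ring

theorem bloom_prevalence_estimator_variance (ρ : ℝ)
    (hρ : 0 < ρ) (hρe : ρ ≤ 1 / Real.exp 1) :
    (1 / ((1 - ρ) / ρ)) * Real.sqrt (1 - (1 - ρ) ^ ((1 - ρ) / ρ))
        * (1 - ρ) ^ (1 - ((1 - ρ) / ρ) / 2)
      ≤ Real.sqrt (ρ * (1 - ρ)) ∧
    ρ * Real.sqrt ((1 - ρ) ^ (-((1 - ρ) / ρ)) - 1) ≤ Real.sqrt (ρ * (1 - ρ)) := by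
  rw [one_div, ← exp_neg] at hρe
  have hρ1 : ρ < 1 := hρe.trans_lt (exp_lt_one_iff.mpr (by norm_num))
  have hx : 0 < 1 - ρ := sub_pos.mpr hρ1
  have hρ_le_rpow : ρ ≤ (1 - ρ) ^ ((1 - ρ) / ρ) :=
    hρe.trans (exp_neg_one_le_one_sub_rpow hρ hρ1)
  have pooled_le : ρ * √((1 - ρ) ^ (-((1 - ρ) / ρ)) - 1) ≤ √(ρ * (1 - ρ)) := by
    rw [rpow_neg hx.le]
    exact mul_sqrt_inv_sub_one_le_sqrt_mul_one_sub hρ hρ_le_rpow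
  exact ⟨(one_div_div_mul_sqrt_one_sub_rpow_mul_rpow hx ρ _).trans_le pooled_le, pooled_le⟩
end
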